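/- arXiv:0903.1370 — 2 statements merged into one kernel-verified Lean document; each statement's English description precedes it below -/
import Mathlib

section
/- Let H2 = {η ∈ L²(ℝ) : ∫_ℝ (|η'|² + y⁴|η|²) dy < ∞}. Then the quadratic form K(η) = ∫_ℝ y²|η|² dy is compact relative to the H2-norm, i.e., any sequence bounded in H2 has a subsequence along which K converges (equivalently, the embedding of H2 into the weighted space L²(ℝ, y² dy) is compact). -/
/-!
A bound on `∫ η'²` makes the `η n` uniformly ½-Hölder, `(η x - η z)² ≤ C |x - z|` (fundamental
theorem of calculus and Cauchy–Schwarz), and together with `∫ y⁴ η² ≤ C` this bounds them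
pointwise. Arzelà–Ascoli, as a diagonal extraction on a countable dense set, gives a subsequence
converging pointwise to a continuous `ζ`, and `∫ y⁴ ζ² < ∞` by Fatou. Outside `[-R, R]` the weight
`y²` is at most `y⁴ / R²`, so the integrands `y² (η - ζ)²` are uniformly small there, while on
`[-R, R]` they are uniformly bounded and dominated convergence applies.
-/

open MeasureTheory Filter Set Topology
open scoped ENNReal

theorem sq_integral_le_measureReal_univ_mul_integral_sq {α : Type*} [MeasurableSpace α]
    {μ : Measure α} [IsFiniteMeasure μ] {f : α → ℝ} (hf : MemLp f 2 μ) :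
    (∫ x, f x ∂μ) ^ 2 ≤ μ.real univ * ∫ x, f x ^ 2 ∂μ := by
  rcases eq_zero_or_neZero μ with rfl | hμ
  · simp
  have jensen := (even_two.convexOn_pow (𝕜 := ℝ)).map_average_le (μ := μ)
    (continuous_pow 2).continuousOn isClosed_univ (ae_of_all _ fun x => mem_univ (f x))
    (hf.integrable one_le_two) hf.integrable_sq
  simp only [average_eq, smul_eq_mul, inv_mul_eq_div, div_pow] at jensen
  have hL := measureReal_univ_pos (μ := μ)
  rw [div_le_div_iff₀ (by positivity) hL] at jensen
  nlinarith

theorem integrable_and_integral_le_of_integral_add_le {α : Type*} [MeasurableSpace α]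
    {μ : Measure α} {f g : α → ℝ} {C : ℝ} (hf : AEStronglyMeasurable f μ)
    (hg : AEStronglyMeasurable g μ) (hf0 : ∀ x, 0 ≤ f x) (hg0 : ∀ x, 0 ≤ g x)
    (hfg : Integrable (fun x => f x + g x) μ) (hC : ∫ x, f x + g x ∂μ ≤ C) :
    (Integrable f μ ∧ ∫ x, f x ∂μ ≤ C) ∧ (Integrable g μ ∧ ∫ x, g x ∂μ ≤ C) := by
  have hfi : Integrable f μ := hfg.mono' hf (ae_of_all _ fun x => by
    rw [Real.norm_eq_abs, abs_of_nonneg (hf0 x)]; linarith [hg0 x])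
  have hgi : Integrable g μ := hfg.mono' hg (ae_of_all _ fun x => by
    rw [Real.norm_eq_abs, abs_of_nonneg (hg0 x)]; linarith [hf0 x])
  exact ⟨⟨hfi, (integral_mono hfi hfg fun x => by linarith [hg0 x]).trans hC⟩,
    ⟨hgi, (integral_mono hgi hfg fun x => by linarith [hf0 x]).trans hC⟩⟩

theorem integrable_of_tendsto_of_integral_norm_le {μ : Measure ℝ} {G : ℕ → ℝ → ℝ}
    {f : ℝ → ℝ} {C : ℝ} (hGf : ∀ x, Tendsto (G · x) atTop (𝓝 (f x)))
    (hG : ∀ n, Integrable (G n) μ) (hC : ∀ n, ∫ x, ‖G n x‖ ∂μ ≤ C) : Integrable f μ := by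
  refine integrable_of_tendsto (ae_of_all _ hGf) (fun n => (hG n).aestronglyMeasurable)
    (ne_top_of_le_ne_top (ENNReal.ofReal_ne_top (r := C)) (liminf_le_of_frequently_le' ?_))
  refine Frequently.of_forall fun n => ?_
  rw [← ofReal_integral_norm_eq_lintegral_enorm (hG n)]
  exact ENNReal.ofReal_le_ofReal (hC n)

theorem tendsto_integral_zero_of_tight {α : Type*} [MeasurableSpace α] {μ : Measure α}
    {g : ℕ → α → ℝ} (hg : ∀ k, Integrable (g k) μ) (hg0 : ∀ k x, 0 ≤ g k x)
    (hlim : ∀ x, Tendsto (g · x) atTop (𝓝 0))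
    (htight : ∀ ε > 0, ∃ s, MeasurableSet s ∧ μ s ≠ ∞ ∧ (∃ M, ∀ k, ∀ x ∈ s, g k x ≤ M) ∧
      ∀ k, ∫ x in sᶜ, g k x ∂μ ≤ ε) :
    Tendsto (fun k => ∫ x, g k x ∂μ) atTop (𝓝 0) := by
  refine tendsto_order.2 ⟨fun a ha => Eventually.of_forall fun k =>
    ha.trans_le (integral_nonneg (hg0 k)), fun ε hε => ?_⟩
  obtain ⟨s, hs, hμs, ⟨M, hM⟩, htail⟩ := htight (ε / 2) (half_pos hε)
  have hinner : Tendsto (fun k => ∫ x in s, g k x ∂μ) atTop (𝓝 0) := by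
    simpa using tendsto_integral_of_dominated_convergence (fun _ => M)
      (fun k => (hg k).aestronglyMeasurable.restrict) (integrableOn_const hμs)
      (fun k => (ae_restrict_iff' hs).2 (ae_of_all _ fun x hx => by
        rw [Real.norm_eq_abs, abs_of_nonneg (hg0 k x)]; exact hM k x hx))
      (ae_of_all _ hlim)
  filter_upwards [hinner.eventually (gt_mem_nhds (half_pos hε))] with k hk
  rw [← integral_add_compl hs (hg k)]
  linarith [htail k]

theorem equicontinuous_of_dist_sq_le {ι X α : Type*} [PseudoMetricSpace X] [PseudoMetricSpace α]
    {F : ι → X → α} {A : ℝ} (h : ∀ i x z, dist (F i x) (F i z) ^ 2 ≤ A * dist x z) :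
    Equicontinuous F :=
  Metric.equicontinuous_of_continuity_modulus (fun t => √(A * t))
    (by simpa using ((continuous_const.mul continuous_id).sqrt.tendsto (0 : ℝ)))
    F fun x z i => Real.le_sqrt_of_sq_le (h i x z)

theorem Equicontinuous.cauchySeq_of_dense {X α : Type*} [TopologicalSpace X] [UniformSpace α]
    {F : ℕ → X → α} (hF : Equicontinuous F) {s : Set X} (hs : Dense s)
    (h : ∀ y ∈ s, CauchySeq (F · y)) (x : X) : CauchySeq (F · x) := by
  rw [cauchySeq_iff]
  intro V hV
  obtain ⟨W, hW, hWsymm, hWV⟩ := comp_comp_symm_mem_uniformity_sets hV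
  obtain ⟨y, hys, hxy⟩ :=
    ((mem_closure_iff_frequently.1 (hs x)).and_eventually (hF x W hW)).exists
  obtain ⟨N, hN⟩ := cauchySeq_iff.1 (h y hys) W hW
  exact ⟨N, fun k hk l hl => hWV (SetRel.prodMk_mem_comp
    (SetRel.prodMk_mem_comp (hxy k) (hN k hk l hl)) (SetRel.symm W (hxy l)))⟩

theorem Equicontinuous.exists_subseq_tendsto {X α : Type*} [TopologicalSpace X]
    [TopologicalSpace.SeparableSpace X] [PseudoMetricSpace α] [ProperSpace α] {F : ℕ → X → α}
    (hF : Equicontinuous F) (hb : ∀ x, Bornology.IsBounded (range (F · x))) :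
    ∃ φ : ℕ → ℕ, StrictMono φ ∧ ∃ ζ : X → α, ∀ x, Tendsto (fun k => F (φ k) x) atTop (𝓝 (ζ x)) := by
  obtain ⟨s, hsc, hsd⟩ := TopologicalSpace.exists_countable_dense X
  have := hsc.to_subtype
  obtain ⟨g, -, φ, hφ, hg⟩ :=
    (isCompact_univ_pi fun y : s => (hb y).isCompact_closure).tendsto_subseq
      (x := fun n (y : s) => F n y) fun n => mem_univ_pi.2 fun y => subset_closure (mem_range_self n)
  have hcauchy : ∀ x, CauchySeq fun k => F (φ k) x :=
    (hF.comp φ).cauchySeq_of_dense hsd fun y hy =>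
      ((continuous_apply (⟨y, hy⟩ : s)).continuousAt.tendsto.comp hg).cauchySeq
  choose ζ hζ using fun x => cauchySeq_tendsto_of_complete (hcauchy x)
  exact ⟨φ, hφ, ζ, hζ⟩

theorem sq_sub_le_integral_deriv_sq_mul_abs_sub {f : ℝ → ℝ} (hf : Differentiable ℝ f)
    (hf' : Integrable (fun y => deriv f y ^ 2)) (x z : ℝ) :
    (f x - f z) ^ 2 ≤ (∫ y, deriv f y ^ 2) * |x - z| := by
  wlog hzx : z ≤ x generalizing x z
  · rw [abs_sub_comm, ← neg_sub (f z), neg_sq]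
    exact this z x (le_of_not_ge hzx)
  have hL2 : MemLp (deriv f) 2 :=
    (memLp_two_iff_integrable_sq (measurable_deriv f).aestronglyMeasurable).2 hf'
  have hftc : ∫ y in Ioc z x, deriv f y = f x - f z := by
    rw [← intervalIntegral.integral_of_le hzx]
    exact intervalIntegral.integral_deriv_eq_sub (fun y _ => hf y)
      ((hL2.locallyIntegrable one_le_two).integrableOn_isCompact isCompact_uIcc).intervalIntegrable
  calc (f x - f z) ^ 2 ≤ (x - z) * ∫ y in Ioc z x, deriv f y ^ 2 := by
        simpa [hftc, hzx] using
          sq_integral_le_measureReal_univ_mul_integral_sq (hL2.restrict (Ioc z x))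
    _ ≤ (∫ y, deriv f y ^ 2) * |x - z| := by
        rw [abs_of_nonneg (sub_nonneg.2 hzx), mul_comm _ (x - z)]
        exact mul_le_mul_of_nonneg_left
          (setIntegral_le_integral hf' (ae_of_all _ fun y => sq_nonneg _)) (sub_nonneg.2 hzx)

theorem sq_le_two_mul_integral_add_of_sq_sub_le {f : ℝ → ℝ} {A : ℝ} (hc : Continuous f)
    (hf4 : Integrable (fun y => y ^ 4 * f y ^ 2)) (hA : ∀ x z, (f x - f z) ^ 2 ≤ A * |x - z|)
    (x : ℝ) : f x ^ 2 ≤ 2 * (∫ y, y ^ 4 * f y ^ 2) + 2 * A * (|x| + 2) := by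
  -- compare `f x` with `f y₀`, where `y₀` minimises `f²` on `[1, 2]` (there `y⁴ ≥ 1`)
  obtain ⟨y₀, ⟨hy₀1, hy₀2⟩, hmin⟩ := isCompact_Icc.exists_isMinOn (nonempty_Icc.2 one_le_two)
    (hc.pow 2).continuousOn
  have hy₀ : f y₀ ^ 2 ≤ ∫ y, y ^ 4 * f y ^ 2 :=
    calc f y₀ ^ 2 = f y₀ ^ 2 * volume.real (Icc (1 : ℝ) 2) := by norm_num [measureReal_def]
      _ ≤ ∫ y in Icc 1 2, y ^ 4 * f y ^ 2 := by
        refine setIntegral_ge_of_const_le_real measurableSet_Icc measure_Icc_lt_top.ne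
          (fun y hy => ?_) hf4.integrableOn
        have hmin_y : f y₀ ^ 2 ≤ f y ^ 2 := hmin hy
        nlinarith [one_le_pow₀ (n := 4) hy.1, sq_nonneg (f y)]
      _ ≤ ∫ y, y ^ 4 * f y ^ 2 :=
        setIntegral_le_integral hf4 (ae_of_all _ fun y => by positivity)
  have hA0 : 0 ≤ A := by simpa using (sq_nonneg _).trans (hA 1 0)
  have hdist : |x - y₀| ≤ |x| + 2 :=
    calc |x - y₀| ≤ |x| + |y₀| := abs_sub _ _
      _ ≤ |x| + 2 := by gcongr; exact abs_le.2 ⟨by linarith, hy₀2⟩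
  nlinarith [hA x y₀, sq_nonneg (f x - 2 * f y₀), mul_le_mul_of_nonneg_left hdist hA0]

theorem sq_mul_sq_le_of_mem_compl_Icc {R y : ℝ} (hR : 0 < R) (hy : y ∈ (Icc (-R) R)ᶜ)
    (a : ℝ) : y ^ 2 * a ^ 2 ≤ y ^ 4 * a ^ 2 / R ^ 2 := by
  have hRy : R ^ 2 ≤ y ^ 2 := by
    simp only [mem_compl_iff, mem_Icc, not_and_or, not_le] at hy
    rcases hy with hy | hy <;> nlinarith
  rw [le_div_iff₀ (by positivity)]
  nlinarith [mul_le_mul_of_nonneg_left hRy (mul_nonneg (sq_nonneg y) (sq_nonneg a))]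

section WeightedTail

variable {f : ℝ → ℝ} {R : ℝ}

theorem integrableOn_compl_Icc_sq_mul_sq (hf : AEStronglyMeasurable f)
    (hf4 : Integrable (fun y => y ^ 4 * f y ^ 2)) (hR : 0 < R) :
    IntegrableOn (fun y => y ^ 2 * f y ^ 2) (Icc (-R) R)ᶜ :=
  (hf4.div_const (R ^ 2)).integrableOn.mono'
    ((continuous_pow 2).aestronglyMeasurable.mul (hf.pow 2)).restrict
    ((ae_restrict_iff' measurableSet_Icc.compl).2 (ae_of_all _ fun y hy => by
      rw [Real.norm_eq_abs, abs_of_nonneg (by positivity)]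
      exact sq_mul_sq_le_of_mem_compl_Icc hR hy (f y)))

theorem setIntegral_compl_Icc_sq_mul_sq_le (hf : AEStronglyMeasurable f)
    (hf4 : Integrable (fun y => y ^ 4 * f y ^ 2)) (hR : 0 < R) :
    ∫ y in (Icc (-R) R)ᶜ, y ^ 2 * f y ^ 2 ≤ (∫ y, y ^ 4 * f y ^ 2) / R ^ 2 :=
  calc ∫ y in (Icc (-R) R)ᶜ, y ^ 2 * f y ^ 2
      ≤ ∫ y in (Icc (-R) R)ᶜ, y ^ 4 * f y ^ 2 / R ^ 2 :=
        setIntegral_mono_on (integrableOn_compl_Icc_sq_mul_sq hf hf4 hR)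
          (hf4.div_const _).integrableOn measurableSet_Icc.compl
          fun y hy => sq_mul_sq_le_of_mem_compl_Icc hR hy (f y)
    _ ≤ (∫ y, y ^ 4 * f y ^ 2) / R ^ 2 := by
        rw [integral_div]
        exact div_le_div_of_nonneg_right
          (setIntegral_le_integral hf4 (ae_of_all _ fun y => by positivity)) (sq_nonneg R)

theorem integrable_sq_mul_sq (hf : Continuous f) (hf4 : Integrable (fun y => y ^ 4 * f y ^ 2)) :
    Integrable (fun y => y ^ 2 * f y ^ 2) := by
  have := (integrableOn_compl_Icc_sq_mul_sq hf.aestronglyMeasurable hf4 one_pos).union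
    ((by fun_prop : Continuous fun y => y ^ 2 * f y ^ 2).integrableOn_Icc (a := -1) (b := 1))
  rwa [compl_union_self, integrableOn_univ] at this

end WeightedTail

theorem tendsto_integral_sq_mul_sq_of_tendsto_zero {h : ℕ → ℝ → ℝ} {B : ℝ}
    (hc : ∀ k, Continuous (h k)) (h4 : ∀ k, Integrable (fun y => y ^ 4 * h k y ^ 2))
    (hB : ∀ k, ∫ y, y ^ 4 * h k y ^ 2 ≤ B)
    (hloc : ∀ R, ∃ M, ∀ k, ∀ y ∈ Icc (-R) R, h k y ^ 2 ≤ M)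
    (hlim : ∀ y, Tendsto (h · y) atTop (𝓝 0)) :
    Tendsto (fun k => ∫ y, y ^ 2 * h k y ^ 2) atTop (𝓝 0) := by
  refine tendsto_integral_zero_of_tight (fun k => integrable_sq_mul_sq (hc k) (h4 k))
    (fun k y => by positivity) (fun y => by simpa using ((hlim y).pow 2).const_mul (y ^ 2))
    fun ε hε => ?_
  obtain ⟨R, hRε, hR⟩ := (((tendsto_const_nhds (x := B)).div_atTop
    (tendsto_pow_atTop two_ne_zero)).eventually (ge_mem_nhds hε)).and (eventually_gt_atTop 0)
    |>.exists
  obtain ⟨M, hM⟩ := hloc R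
  refine ⟨Icc (-R) R, measurableSet_Icc, measure_Icc_lt_top.ne, ⟨R ^ 2 * M, fun k y hy => ?_⟩,
    fun k => (setIntegral_compl_Icc_sq_mul_sq_le (hc k).aestronglyMeasurable (h4 k) hR).trans
      (div_le_div_of_nonneg_right (hB k) (by positivity) |>.trans hRε)⟩
  have hy2 : y ^ 2 ≤ R ^ 2 := sq_le_sq' hy.1 hy.2
  exact mul_le_mul hy2 (hM k y hy) (sq_nonneg _) (sq_nonneg _)

theorem tendsto_integral_sq_mul_sub_sq_of_tendsto {η : ℕ → ℝ → ℝ} {ζ : ℝ → ℝ} {C : ℝ}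
    (hη : ∀ k, Continuous (η k)) (hζ : Continuous ζ)
    (hη4 : ∀ k, Integrable (fun y => y ^ 4 * η k y ^ 2)) (hC : ∀ k, ∫ y, y ^ 4 * η k y ^ 2 ≤ C)
    (hζ4 : Integrable (fun y => y ^ 4 * ζ y ^ 2))
    (hloc : ∀ R, ∃ M, ∀ k, ∀ y ∈ Icc (-R) R, η k y ^ 2 ≤ M)
    (hlim : ∀ y, Tendsto (η · y) atTop (𝓝 (ζ y))) :
    Tendsto (fun k => ∫ y, y ^ 2 * (η k y - ζ y) ^ 2) atTop (𝓝 0) := by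
  have hsub (w a b : ℝ) (hw : 0 ≤ w) : w * (a - b) ^ 2 ≤ 2 * (w * a ^ 2) + 2 * (w * b ^ 2) := by
    nlinarith [mul_nonneg hw (sq_nonneg (a + b))]
  have hmaj (k : ℕ) : Integrable fun y => 2 * (y ^ 4 * η k y ^ 2) + 2 * (y ^ 4 * ζ y ^ 2) :=
    ((hη4 k).const_mul 2).add (hζ4.const_mul 2)
  have h4 (k : ℕ) : Integrable fun y => y ^ 4 * (η k y - ζ y) ^ 2 :=
    (hmaj k).mono' ((continuous_pow 4).mul (((hη k).sub hζ).pow 2)).aestronglyMeasurable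
      (ae_of_all _ fun y => by
        rw [Real.norm_eq_abs, abs_of_nonneg (by positivity)]
        exact hsub _ _ _ (by positivity))
  refine tendsto_integral_sq_mul_sq_of_tendsto_zero (h := fun k y => η k y - ζ y)
    (B := 2 * C + 2 * ∫ y, y ^ 4 * ζ y ^ 2) (fun k => (hη k).sub hζ) h4 (fun k => ?_)
    (fun R => ?_) (fun y => by simpa using (hlim y).sub_const (ζ y))
  · calc ∫ y, y ^ 4 * (η k y - ζ y) ^ 2
        ≤ ∫ y, 2 * (y ^ 4 * η k y ^ 2) + 2 * (y ^ 4 * ζ y ^ 2) :=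
          integral_mono (h4 k) (hmaj k) fun y => hsub _ _ _ (by positivity)
      _ ≤ 2 * C + 2 * ∫ y, y ^ 4 * ζ y ^ 2 := by
          rw [integral_add ((hη4 k).const_mul 2) (hζ4.const_mul 2), integral_const_mul,
            integral_const_mul]
          linarith [hC k]
  · obtain ⟨M, hM⟩ := hloc R
    refine ⟨4 * M, fun k y hy => ?_⟩
    have hζM : ζ y ^ 2 ≤ M := le_of_tendsto' ((hlim y).pow 2) fun k => hM k y hy
    nlinarith [hsub 1 (η k y) (ζ y) zero_le_one, hM k y hy]

theorem compact_embedding_H2_weightedL2_general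
    (η : ℕ → ℝ → ℝ) (C : ℝ)
    (hdiff : ∀ n, Differentiable ℝ (η n))
    (hint : ∀ n, Integrable (fun y => (deriv (η n) y) ^ 2 + y ^ 4 * (η n y) ^ 2)
      (volume : Measure ℝ))
    (hbound : ∀ n, ∫ y : ℝ, ((deriv (η n) y) ^ 2 + y ^ 4 * (η n y) ^ 2) ≤ C) :
    ∃ (φ : ℕ → ℕ) (ζ : ℝ → ℝ), StrictMono φ ∧
      Integrable (fun y => y ^ 2 * (ζ y) ^ 2) (volume : Measure ℝ) ∧
      Tendsto (fun k => ∫ y : ℝ, y ^ 2 * (η (φ k) y - ζ y) ^ 2) atTop (nhds 0) := by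
  have hC : 0 ≤ C := (integral_nonneg fun y => by positivity).trans (hbound 0)
  have hsplit (n : ℕ) := integrable_and_integral_le_of_integral_add_le
    (f := fun y => deriv (η n) y ^ 2) (g := fun y => y ^ 4 * η n y ^ 2)
    ((measurable_deriv (η n)).pow_const 2).aestronglyMeasurable
    ((continuous_pow 4).mul ((hdiff n).continuous.pow 2)).aestronglyMeasurable
    (fun y => by positivity) (fun y => by positivity) (hint n) (hbound n)
  simp only [forall_and] at hsplit
  obtain ⟨⟨hderiv, hderivC⟩, hweight, hweightC⟩ := hsplit
  have hholder (n : ℕ) (x z : ℝ) : (η n x - η n z) ^ 2 ≤ C * |x - z| :=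
    (sq_sub_le_integral_deriv_sq_mul_abs_sub (hdiff n) (hderiv n) x z).trans
      (mul_le_mul_of_nonneg_right (hderivC n) (abs_nonneg _))
  have hpt (n : ℕ) (x : ℝ) : η n x ^ 2 ≤ 2 * C + 2 * C * (|x| + 2) := by
    have := sq_le_two_mul_integral_add_of_sq_sub_le (hdiff n).continuous (hweight n)
      (hholder n) x
    linarith [hweightC n]
  have hequi : Equicontinuous η := equicontinuous_of_dist_sq_le fun n x z => by
    simpa only [Real.dist_eq, sq_abs] using hholder n x z
  obtain ⟨φ, hφ, ζ, hζ⟩ := hequi.exists_subseq_tendsto fun x => isBounded_iff_forall_norm_le.2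
    ⟨_, forall_mem_range.2 fun n => Real.abs_le_sqrt (hpt n x)⟩
  have hζc : Continuous ζ := (tendsto_pi_nhds.2 hζ).continuous_of_equicontinuous (hequi.comp φ)
  have hζ4 : Integrable fun y => y ^ 4 * ζ y ^ 2 :=
    integrable_of_tendsto_of_integral_norm_le (fun y => ((hζ y).pow 2).const_mul (y ^ 4))
      (fun k => hweight (φ k)) fun k => (integral_congr_ae (ae_of_all _ fun y =>
        Real.norm_of_nonneg (by positivity))).trans_le (hweightC (φ k))
  refine ⟨φ, ζ, hφ, integrable_sq_mul_sq hζc hζ4,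
    tendsto_integral_sq_mul_sub_sq_of_tendsto (fun k => (hdiff (φ k)).continuous) hζc
      (fun k => hweight (φ k)) (fun k => hweightC (φ k)) hζ4
      (fun R => ⟨2 * C + 2 * C * (R + 2), fun k y hy => (hpt (φ k) y).trans ?_⟩) hζ⟩
  gcongr
  exact abs_le.2 hy

/-- On `H2 = {η ∈ L²(ℝ) : ∫ (|η'|² + y⁴|η|²) < ∞}` the quadratic form
`K(η) = ∫ y²|η|²` is compact relative to the H2-norm: any sequence bounded in H2 has a
subsequence converging in the weighted space `L²(ℝ, y² dy)`. -/
theorem compact_embedding_H2_weightedL2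
    (η : ℕ → ℝ → ℝ) (C : ℝ)
    (hdiff : ∀ n, Differentiable ℝ (η n))
    (hL2 : ∀ n, MemLp (η n) 2 (volume : Measure ℝ))
    (hint : ∀ n, Integrable (fun y => (deriv (η n) y) ^ 2 + y ^ 4 * (η n y) ^ 2)
      (volume : Measure ℝ))
    (hbound : ∀ n, ∫ y : ℝ, ((deriv (η n) y) ^ 2 + y ^ 4 * (η n y) ^ 2) ≤ C) :
    ∃ (φ : ℕ → ℕ) (ζ : ℝ → ℝ), StrictMono φ ∧
      Integrable (fun y => y ^ 2 * (ζ y) ^ 2) (volume : Measure ℝ) ∧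
      Tendsto (fun k => ∫ y : ℝ, y ^ 2 * (η (φ k) y - ζ y) ^ 2) atTop (nhds 0) :=
  compact_embedding_H2_weightedL2_general η C hdiff hint hbound
end

section
/- Under the assumption Λ̄ < 0, or Λ̄ ≤ 0 and κ = 1, the quadratic form Q(u) = ∫₀^∞ (|u'|² − Λ̄ r⁴|u|² + 4κ r²|u|²) dr satisfies Q(u) ≥ ε ∫₀^∞ (|u'|² + r^q |u|²) dr for some ε > 0, where q = 4 if Λ̄ < 0 and q = 2 if Λ̄ = 0 (and κ = 1). -/
open MeasureTheory Set

/-! The potential `-Λ̄ r⁴ + 4κ r²` dominates a positive multiple `c ≤ 1` of the weight `r^q` at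
every `r > 0`, so the energy density dominates `c` times the density of `∫ (|u'|² + r^q |u|²)`
pointwise, and the inequality follows by integrating. -/

theorem const_mul_setIntegral_le {α : Type*} [MeasurableSpace α] {μ : Measure α} {s : Set α}
    (hs : MeasurableSet s) {f g : α → ℝ} (hf : IntegrableOn f s μ) (hg : IntegrableOn g s μ)
    {c : ℝ} (hfg : ∀ x ∈ s, c * f x ≤ g x) :
    c * ∫ x in s, f x ∂μ ≤ ∫ x in s, g x ∂μ := by
  rw [← integral_const_mul]
  exact setIntegral_mono_on (hf.const_mul c) hg hs hfg

theorem exists_const_mul_rpow_le_gravitational_potential (Λ κ q : ℝ) (hκ : 0 ≤ κ)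
    (hq : (Λ < 0 ∧ q = 4) ∨ (Λ = 0 ∧ κ = 1 ∧ q = 2)) :
    ∃ c : ℝ, 0 < c ∧ c ≤ 1 ∧ ∀ r : ℝ, 0 < r → c * r ^ q ≤ -Λ * r ^ 4 + 4 * κ * r ^ 2 := by
  rcases hq with ⟨hΛ, rfl⟩ | ⟨rfl, rfl, rfl⟩
  · refine ⟨min 1 (-Λ), lt_min one_pos (neg_pos.mpr hΛ), min_le_left _ _, fun r _ => ?_⟩
    rw [Real.rpow_ofNat]
    have hc : min 1 (-Λ) ≤ -Λ := min_le_right _ _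
    nlinarith [pow_nonneg (sq_nonneg r) 2, mul_nonneg hκ (sq_nonneg r)]
  · refine ⟨1, one_pos, le_rfl, fun r _ => ?_⟩
    rw [Real.rpow_ofNat]
    nlinarith [sq_nonneg r]

theorem gravitational_energy_coercive_general
    (Λ κ : ℝ) (hκ : κ = 0 ∨ κ = 1)
    (q : ℝ) (hq : (Λ < 0 ∧ q = 4) ∨ (Λ = 0 ∧ κ = 1 ∧ q = 2)) :
    ∃ ε : ℝ, 0 < ε ∧
      ∀ u : ℝ → ℝ, Differentiable ℝ u → u 0 = 0 →
        Integrable (fun r => (deriv u r) ^ 2) (volume.restrict (Ioi (0:ℝ))) →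
        Integrable (fun r => r ^ q * (u r) ^ 2) (volume.restrict (Ioi (0:ℝ))) →
        Integrable (fun r => (-Λ * r ^ 4 + 4 * κ * r ^ 2) * (u r) ^ 2)
          (volume.restrict (Ioi (0:ℝ))) →
        (∫ r in Ioi (0:ℝ),
            ((deriv u r) ^ 2 - Λ * r ^ 4 * (u r) ^ 2 + 4 * κ * r ^ 2 * (u r) ^ 2))
          ≥ ε * ∫ r in Ioi (0:ℝ), ((deriv u r) ^ 2 + r ^ q * (u r) ^ 2) := by
  have hκ0 : 0 ≤ κ := by rcases hκ with rfl | rfl <;> norm_num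
  obtain ⟨c, hc, hc1, hweight⟩ := exists_const_mul_rpow_le_gravitational_potential Λ κ q hκ0 hq
  refine ⟨c, hc, fun u _ _ hkinetic hweighted hpotential => ?_⟩
  have henergy : IntegrableOn
      (fun r => (deriv u r) ^ 2 - Λ * r ^ 4 * (u r) ^ 2 + 4 * κ * r ^ 2 * (u r) ^ 2) (Ioi 0) :=
    (hkinetic.add hpotential).congr <| .of_forall fun r => by simp only [Pi.add_apply]; ring
  refine const_mul_setIntegral_le measurableSet_Ioi (hkinetic.add hweighted) henergy
    fun r (hr : 0 < r) => ?_
  have hpot := mul_le_mul_of_nonneg_right (hweight r hr) (sq_nonneg (u r))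
  simp only [Pi.add_apply]
  nlinarith [mul_le_mul_of_nonneg_right hc1 (sq_nonneg (deriv u r))]

/-- Under `Λ̄ < 0`, or `Λ̄ ≤ 0` with `κ = 1`, the gravitational energy form
`Q(u) = ∫₀^∞ (|u'|² − Λ̄ r⁴|u|² + 4κ r²|u|²)` controls the H1-norm:
`Q(u) ≥ ε ∫₀^∞ (|u'|² + r^q |u|²)` for some `ε > 0`, with `q = 4` if `Λ̄ < 0` and
`q = 2` if `Λ̄ = 0` (and `κ = 1`). -/
theorem gravitational_energy_coercive
    (Λ κ : ℝ) (hκ : κ = 0 ∨ κ = 1)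
    (hΛκ : Λ < 0 ∨ (Λ ≤ 0 ∧ κ = 1))
    (q : ℝ) (hq : (Λ < 0 ∧ q = 4) ∨ (Λ = 0 ∧ κ = 1 ∧ q = 2)) :
    ∃ ε : ℝ, 0 < ε ∧
      ∀ u : ℝ → ℝ, Differentiable ℝ u → u 0 = 0 →
        Integrable (fun r => (deriv u r) ^ 2) (volume.restrict (Ioi (0:ℝ))) →
        Integrable (fun r => r ^ q * (u r) ^ 2) (volume.restrict (Ioi (0:ℝ))) →
        Integrable (fun r => (-Λ * r ^ 4 + 4 * κ * r ^ 2) * (u r) ^ 2)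
          (volume.restrict (Ioi (0:ℝ))) →
        (∫ r in Ioi (0:ℝ),
            ((deriv u r) ^ 2 - Λ * r ^ 4 * (u r) ^ 2 + 4 * κ * r ^ 2 * (u r) ^ 2))
          ≥ ε * ∫ r in Ioi (0:ℝ), ((deriv u r) ^ 2 + r ^ q * (u r) ^ 2) :=
  gravitational_energy_coercive_general Λ κ hκ q hq
end
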